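/- Let T > 0, let π = (π_n) be a sequence of partitions of [0,T] with mesh tending to 0, let p > 2 and γ = (p−2)/p, and let x : [0,T] → ℝ be continuous with finite p-th variation [x]^(p)_π along π and with finite scaled quadratic variation ⟨x⟩^(p)_π along π. Let A : [0,T] → ℝ be continuous with Σ_{t^n_i ≤ t} |A(t^n_{i+1}) − A(t^n_i)|^p → 0 for every t ∈ [0,T]. Then x + A has finite scaled quadratic variation along π and ⟨x + A⟩^(p)_π(t) = ⟨x⟩^(p)_π(t) for every t ∈ [0,T]; that is, the sums Σ_{t^n_{i+1} ≤ t} ([x+A]^(p)_π(t^n_{i+1}) − [x+A]^(p)_π(t^n_i))^γ ((x+A)(t^n_{i+1}) − (x+A)(t^n_i))² converge to ⟨x⟩^(p)_π(t). -/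

import Mathlib

open Filter Topology

/-!
By Minkowski's inequality the `ℓᵖ` norms of the increments of `x + A` and of `x` differ by at
most that of `A`, which tends to `0`; this gives the `p`-th variation of `x + A`. With the weights
`wᵢ = (Δφ)ᵢ ^ γ ≥ 0`, `(∑ wᵢ aᵢ²) ^ (1/2)` is a seminorm too, so the same argument gives the scaled
quadratic variation once `∑ wᵢ (ΔA)ᵢ² → 0`. Hölder's inequality with exponents `p / (p - 2)` and
`p / 2` bounds this sum by `(φ T - φ 0) ^ γ` times the `2 / p`-th power of the `p`-th variation
sums of `A`.
-/

open Finset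

section Minkowski

variable {α ι : Type*} {l : Filter α} {s : α → Finset ι} {f g : α → ι → ℝ} {p L : ℝ}

theorem tendsto_sum_abs_add_rpow_of_tendsto_zero [l.NeBot] (hp : 1 ≤ p)
    (hf : Tendsto (fun n => ∑ i ∈ s n, |f n i| ^ p) l (𝓝 L))
    (hg : Tendsto (fun n => ∑ i ∈ s n, |g n i| ^ p) l (𝓝 0)) :
    Tendsto (fun n => ∑ i ∈ s n, |f n i + g n i| ^ p) l (𝓝 L) := by
  have hp0 : 0 < p := zero_lt_one.trans_le hp
  have hL : 0 ≤ L := ge_of_tendsto' hf fun n => sum_nonneg fun i _ => by positivity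
  have hfnorm := hf.rpow_const (p := 1 / p) (.inr (by positivity))
  have hgnorm := hg.rpow_const_nhds_zero (p := 1 / p) (by positivity)
  have hupper : ∀ n, (∑ i ∈ s n, |f n i + g n i| ^ p) ^ (1 / p) ≤
      (∑ i ∈ s n, |f n i| ^ p) ^ (1 / p) + (∑ i ∈ s n, |g n i| ^ p) ^ (1 / p) :=
    fun n => Real.Lp_add_le (s n) (f n) (g n) hp
  have hlower : ∀ n, (∑ i ∈ s n, |f n i| ^ p) ^ (1 / p) - (∑ i ∈ s n, |g n i| ^ p) ^ (1 / p) ≤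
      (∑ i ∈ s n, |f n i + g n i| ^ p) ^ (1 / p) := fun n => by
    have h := Real.Lp_add_le (s n) (fun i => f n i + g n i) (fun i => -g n i) hp
    simp only [add_neg_cancel_right, abs_neg] at h
    linarith
  have hnorm : Tendsto (fun n => (∑ i ∈ s n, |f n i + g n i| ^ p) ^ (1 / p)) l
      (𝓝 (L ^ (1 / p))) :=
    tendsto_of_tendsto_of_tendsto_of_le_of_le (by simpa using hfnorm.sub hgnorm)
      (by simpa using hfnorm.add hgnorm) hlower hupper
  convert hnorm.rpow_const (p := p) (.inr hp0.le) using 1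
  · ext n
    rw [← Real.rpow_mul (sum_nonneg fun i _ => by positivity), one_div_mul_cancel hp0.ne',
      Real.rpow_one]
  · rw [← Real.rpow_mul hL, one_div_mul_cancel hp0.ne', Real.rpow_one]

theorem tendsto_sum_mul_add_sq_of_tendsto_zero [l.NeBot] {w : α → ι → ℝ}
    (hw : ∀ n, ∀ i ∈ s n, 0 ≤ w n i)
    (hf : Tendsto (fun n => ∑ i ∈ s n, w n i * f n i ^ 2) l (𝓝 L))
    (hg : Tendsto (fun n => ∑ i ∈ s n, w n i * g n i ^ 2) l (𝓝 0)) :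
    Tendsto (fun n => ∑ i ∈ s n, w n i * (f n i + g n i) ^ 2) l (𝓝 L) := by
  have hsq : ∀ n (h : ι → ℝ), ∑ i ∈ s n, |√(w n i) * h i| ^ (2 : ℝ) =
      ∑ i ∈ s n, w n i * h i ^ 2 := fun n h =>
    sum_congr rfl fun i hi => by rw [Real.rpow_two, sq_abs, mul_pow, Real.sq_sqrt (hw n i hi)]
  have key := tendsto_sum_abs_add_rpow_of_tendsto_zero (s := s) (p := 2)
    (f := fun n i => √(w n i) * f n i) (g := fun n i => √(w n i) * g n i) one_le_two
    (by simpa only [hsq] using hf) (by simpa only [hsq] using hg)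
  simpa only [← mul_add, hsq] using key

end Minkowski

theorem sum_rpow_mul_sq_le {ι : Type*} (s : Finset ι) {p : ℝ} (hp : 2 < p) (d e : ι → ℝ)
    (hd : ∀ i ∈ s, 0 ≤ d i) :
    ∑ i ∈ s, d i ^ ((p - 2) / p) * e i ^ 2 ≤
      (∑ i ∈ s, d i) ^ ((p - 2) / p) * (∑ i ∈ s, |e i| ^ p) ^ (2 / p) := by
  have hp0 : p ≠ 0 := by positivity
  have hp2 : p - 2 ≠ 0 := by linarith
  have hconj : Real.HolderConjugate (p / (p - 2)) (p / 2) := by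
    rw [Real.holderConjugate_iff]
    refine ⟨(one_lt_div (by linarith)).mpr (by linarith), ?_⟩
    field_simp
    ring
  have h := Real.inner_le_Lp_mul_Lq_of_nonneg (s := s) hconj
    (f := fun i => d i ^ ((p - 2) / p)) (g := fun i => e i ^ 2)
    (fun i hi => Real.rpow_nonneg (hd i hi) _) (fun i _ => sq_nonneg _)
  have hd_pow : ∑ i ∈ s, (d i ^ ((p - 2) / p)) ^ (p / (p - 2)) = ∑ i ∈ s, d i :=
    sum_congr rfl fun i hi => by
      rw [← Real.rpow_mul (hd i hi), div_mul_div_comm, mul_comm, div_self (mul_ne_zero hp0 hp2),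
        Real.rpow_one]
  have he_pow : ∑ i ∈ s, (e i ^ 2) ^ (p / 2) = ∑ i ∈ s, |e i| ^ p :=
    sum_congr rfl fun i _ => by
      rw [← sq_abs, ← Real.rpow_natCast, ← Real.rpow_mul (abs_nonneg _)]
      congr 1
      ring
  rwa [hd_pow, he_pow, one_div_div, one_div_div] at h

theorem tendsto_sum_rpow_mul_sq_of_tendsto_zero {α ι : Type*} {l : Filter α}
    {s : α → Finset ι} {d e : α → ι → ℝ} {p C : ℝ} (hp : 2 < p)
    (hd : ∀ n, ∀ i ∈ s n, 0 ≤ d n i) (hC : ∀ n, ∑ i ∈ s n, d n i ≤ C)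
    (he : Tendsto (fun n => ∑ i ∈ s n, |e n i| ^ p) l (𝓝 0)) :
    Tendsto (fun n => ∑ i ∈ s n, d n i ^ ((p - 2) / p) * e n i ^ 2) l (𝓝 0) := by
  have hbound : Tendsto (fun n => C ^ ((p - 2) / p) * (∑ i ∈ s n, |e n i| ^ p) ^ (2 / p)) l
      (𝓝 0) := by
    simpa using (he.rpow_const_nhds_zero (p := 2 / p) (by positivity)).const_mul _
  refine squeeze_zero (fun n => sum_nonneg fun i hi => by have := hd n i hi; positivity)
    (fun n => ?_) hbound
  refine (sum_rpow_mul_sq_le (s n) hp (d n) (e n) (hd n)).trans ?_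
  gcongr
  · exact sum_nonneg (hd n)
  · exact hC n

theorem sum_filter_sub_le_sub {f : ℕ → ℝ} {n : ℕ} (hf : ∀ i < n, f i ≤ f (i + 1))
    (P : ℕ → Prop) [DecidablePred P] :
    ∑ i ∈ (range n).filter P, (f (i + 1) - f i) ≤ f n - f 0 := by
  rw [← sum_range_sub]
  exact sum_le_sum_of_subset_of_nonneg (filter_subset _ _)
    fun i hi _ => sub_nonneg.mpr (hf i (mem_range.mp hi))

theorem mem_Icc_of_le_succ {t : ℕ → ℝ} {N : ℕ} {T : ℝ} (h0 : t 0 = 0) (hN : t N = T)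
    (ht : ∀ i < N, t i ≤ t (i + 1)) {i : ℕ} (hi : i ≤ N) : t i ∈ Set.Icc 0 T := by
  have hmono : MonotoneOn t (Set.Iic N) :=
    monotoneOn_of_le_succ Set.ordConnected_Iic fun j _ _ hj =>
      ht j (by simp only [Set.mem_Iic, Order.succ_eq_add_one] at hj; omega)
  exact ⟨h0 ▸ hmono (by simp) hi (Nat.zero_le i), hN ▸ hmono hi Set.self_mem_Iic hi⟩

theorem scaled_qv_add_zero_pvar
    (T : ℝ)
    (π : ℕ → ℕ → ℝ) (N : ℕ → ℕ)
    (hπ0 : ∀ n, π n 0 = 0)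
    (hπT : ∀ n, π n (N n) = T)
    (hπmono : ∀ n, ∀ i < N n, π n i < π n (i + 1))
    (p : ℝ) (hp : 2 < p)
    (x : ℝ → ℝ)
    (φ : ℝ → ℝ)
    (hφmono : MonotoneOn φ (Set.Icc 0 T))
    (hφ : ∀ t ∈ Set.Icc 0 T,
      Tendsto (fun n => ∑ i ∈ Finset.range (N n),
          if π n (i + 1) ≤ t then |x (π n (i + 1)) - x (π n i)| ^ p else 0)
        atTop (𝓝 (φ t)))
    (ψ : ℝ → ℝ)
    (hψ : ∀ t ∈ Set.Icc 0 T,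
      Tendsto (fun n => ∑ i ∈ Finset.range (N n),
          if π n (i + 1) ≤ t then
            (φ (π n (i + 1)) - φ (π n i)) ^ ((p - 2) / p)
              * (x (π n (i + 1)) - x (π n i)) ^ 2
          else 0)
        atTop (𝓝 (ψ t)))
    (A : ℝ → ℝ)
    (hApvar : ∀ t ∈ Set.Icc 0 T,
      Tendsto (fun n => ∑ i ∈ Finset.range (N n),
          if π n (i + 1) ≤ t then |A (π n (i + 1)) - A (π n i)| ^ p else 0)
        atTop (𝓝 0)) :
    (∀ t ∈ Set.Icc 0 T,
      Tendsto (fun n => ∑ i ∈ Finset.range (N n),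
          if π n (i + 1) ≤ t then
            |(x (π n (i + 1)) + A (π n (i + 1))) - (x (π n i) + A (π n i))| ^ p
          else 0)
        atTop (𝓝 (φ t)))
    ∧
    (∀ t ∈ Set.Icc 0 T,
      Tendsto (fun n => ∑ i ∈ Finset.range (N n),
          if π n (i + 1) ≤ t then
            (φ (π n (i + 1)) - φ (π n i)) ^ ((p - 2) / p)
              * ((x (π n (i + 1)) + A (π n (i + 1))) - (x (π n i) + A (π n i))) ^ 2
          else 0)
        atTop (𝓝 (ψ t))) := by
  have hmem : ∀ n, ∀ i ≤ N n, π n i ∈ Set.Icc 0 T := fun n _ =>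
    mem_Icc_of_le_succ (hπ0 n) (hπT n) fun j hj => (hπmono n j hj).le
  have hφ_incr : ∀ n, ∀ i < N n, φ (π n i) ≤ φ (π n (i + 1)) := fun n i hi =>
    hφmono (hmem n i hi.le) (hmem n (i + 1) hi) (hπmono n i hi).le
  simp only [← sum_filter, add_sub_add_comm] at hφ hψ hApvar ⊢
  refine ⟨fun t ht => tendsto_sum_abs_add_rpow_of_tendsto_zero (by linarith) (hφ t ht)
    (hApvar t ht), fun t ht => ?_⟩
  have hweight : ∀ n, ∀ i ∈ (range (N n)).filter (fun i => π n (i + 1) ≤ t),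
      0 ≤ φ (π n (i + 1)) - φ (π n i) := fun n i hi =>
    sub_nonneg.mpr (hφ_incr n i (mem_range.mp (mem_filter.mp hi).1))
  refine tendsto_sum_mul_add_sq_of_tendsto_zero (fun n i hi => ?_) (hψ t ht)
    (tendsto_sum_rpow_mul_sq_of_tendsto_zero (C := φ T - φ 0) hp hweight (fun n => ?_)
      (hApvar t ht))
  · exact Real.rpow_nonneg (hweight n i hi) _
  · simpa only [hπT, hπ0] using sum_filter_sub_le_sub (hφ_incr n) _
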